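/- Let 𝒵 be a finite set and Q₀, Q₁ probability mass functions on 𝒵 with Q₁ absolutely continuous with respect to Q₀. Let n, L be positive integers, N = nL, and α ∈ (0,1). Then D(Q_α^N ‖ Q₀^⊗N) ≤ ((1 + α² χ₂(Q₁‖Q₀))^n − 1)/L. -/

import Mathlib

/-!
Since `log x ≤ x - 1`, the divergence `D(P‖Q)` is at most `∑ P²/Q - 1`. For the slotted mixture
`P = L⁻¹ ∑ₜ Aₜ` this is `L⁻² ∑_{t,t'} ∑ Aₜ Aₜ'/Q - 1`, and each inner sum factors over the
coordinates: it is `(∑ Q_α²/Q₀)ⁿ = (1 + α² χ₂)ⁿ` when `t = t'`, and `1` otherwise since then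
every coordinate carries a factor `Q₀` cancelling the denominator.
-/

open Finset Real

lemma mul_log_div_le_mul_div_sub {p q : ℝ} (hp : 0 ≤ p) (hq : 0 ≤ q) (hpq : q = 0 → p = 0) :
    p * log (p / q) ≤ p * p / q - p := by
  rcases hp.eq_or_lt with rfl | hp
  · simp
  have hq : 0 < q := hq.lt_of_ne fun h => hp.ne' (hpq h.symm)
  calc p * log (p / q) ≤ p * (p / q - 1) :=
        mul_le_mul_of_nonneg_left (log_le_sub_one_of_pos (div_pos hp hq)) hp.le
    _ = p * p / q - p := by ring

lemma sum_mul_log_div_le {X : Type*} [Fintype X] (P Q : X → ℝ) (hP : ∀ x, 0 ≤ P x)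
    (hQ : ∀ x, 0 ≤ Q x) (hPQ : ∀ x, Q x = 0 → P x = 0) :
    ∑ x, P x * log (P x / Q x) ≤ ∑ x, P x * P x / Q x - ∑ x, P x := by
  rw [← sum_sub_distrib]
  exact sum_le_sum fun x _ => mul_log_div_le_mul_div_sub (hP x) (hQ x) (hPQ x)

lemma mul_div_cancel_right_of_imp {a b : ℝ} (h : b = 0 → a = 0) : a * b / b = a := by
  rcases eq_or_ne b 0 with hb | hb
  · simp [hb, h hb]
  · exact mul_div_cancel_right₀ a hb

lemma sum_mix_mul_mix_div {Z : Type*} [Fintype Z] (Q0 Q1 : Z → ℝ) (hQ0sum : ∑ z, Q0 z = 1)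
    (hQ1sum : ∑ z, Q1 z = 1) (hac : ∀ z, Q0 z = 0 → Q1 z = 0) (α : ℝ) :
    ∑ z, ((1 - α) * Q0 z + α * Q1 z) * ((1 - α) * Q0 z + α * Q1 z) / Q0 z
      = 1 + α ^ 2 * ∑ z, (Q1 z - Q0 z) ^ 2 / Q0 z := by
  have hterm : ∀ z, ((1 - α) * Q0 z + α * Q1 z) * ((1 - α) * Q0 z + α * Q1 z) / Q0 z
      = Q0 z + 2 * α * (Q1 z - Q0 z) + α ^ 2 * ((Q1 z - Q0 z) ^ 2 / Q0 z) := fun z => by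
    rcases eq_or_ne (Q0 z) 0 with h | h
    · simp [h, hac z h]
    · field_simp
      ring
  simp only [hterm, sum_add_distrib, ← mul_sum, sum_sub_distrib, hQ0sum, hQ1sum]
  ring

lemma sum_prod_prod {ι κ Z : Type*} [Fintype ι] [DecidableEq ι] [Fintype κ] [DecidableEq κ]
    [Fintype Z] (F : ι → κ → Z → ℝ) :
    ∑ z : ι → κ → Z, ∏ ℓ, ∏ i, F ℓ i (z ℓ i) = ∏ ℓ, ∏ i, ∑ w, F ℓ i w := by
  simp only [Fintype.prod_sum]

lemma sum_mean_mul_mean_div {ι X : Type*} [Fintype ι] [DecidableEq ι] [Nonempty ι] [Fintype X]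
    (A : ι → X → ℝ) (Q : X → ℝ) (c : ℝ)
    (hA : ∀ t t', ∑ x, A t x * A t' x / Q x = if t = t' then c else 1) :
    ∑ x, ((1 / Fintype.card ι : ℝ) * ∑ t, A t x) * ((1 / Fintype.card ι : ℝ) * ∑ t, A t x) / Q x
      = (c - 1) / Fintype.card ι + 1 := by
  have hcard : (Fintype.card ι : ℝ) ≠ 0 := Nat.cast_ne_zero.mpr Fintype.card_ne_zero
  have hexpand : ∀ x, ((1 / Fintype.card ι : ℝ) * ∑ t, A t x)
      * ((1 / Fintype.card ι : ℝ) * ∑ t, A t x) / Q x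
      = (1 / Fintype.card ι : ℝ) ^ 2 * ∑ t, ∑ t', A t x * A t' x / Q x := fun x => by
    rw [mul_mul_mul_comm, sum_mul_sum, ← sq, mul_div_assoc, sum_div]
    simp only [sum_div]
  have hrow : ∀ t : ι, ∑ t' : ι, (if t = t' then c else 1) = Fintype.card ι + (c - 1) :=
    fun t => by
      have hsplit : ∀ t' : ι, (if t = t' then c else 1) = 1 + if t = t' then c - 1 else 0 :=
        fun t' => by split_ifs <;> ring
      simp only [hsplit, sum_add_distrib, sum_ite_eq, mem_univ, if_true, sum_const, card_univ,
        nsmul_eq_mul, mul_one]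
  simp only [hexpand, ← mul_sum]
  rw [sum_comm]
  rw [sum_congr rfl fun t _ => sum_comm]
  simp only [hA, hrow, sum_const, card_univ, nsmul_eq_mul]
  field_simp
  ring

section Slots

variable {ι κ Z : Type*} [Fintype ι] [DecidableEq ι] [Fintype κ]

/-- With `q = Q_α`, this is the density of the paper's `Q_{α,t}^N`. -/
def slotDensity (q₀ q : Z → ℝ) (t : ι) (z : ι → κ → Z) : ℝ :=
  ∏ ℓ, ∏ i, if ℓ = t then q (z ℓ i) else q₀ (z ℓ i)

variable {q₀ q : Z → ℝ}

lemma slotDensity_nonneg (hq₀ : ∀ w, 0 ≤ q₀ w) (hq : ∀ w, 0 ≤ q w) (t : ι) (z : ι → κ → Z) :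
    0 ≤ slotDensity q₀ q t z :=
  prod_nonneg fun ℓ _ => prod_nonneg fun i _ => by split_ifs <;> simp only [hq, hq₀]

lemma slotDensity_eq_zero (hac : ∀ w, q₀ w = 0 → q w = 0) (t : ι) {z : ι → κ → Z}
    (hz : ∏ ℓ, ∏ i, q₀ (z ℓ i) = 0) : slotDensity q₀ q t z = 0 := by
  obtain ⟨ℓ, -, hℓ⟩ := prod_eq_zero_iff.mp hz
  obtain ⟨i, -, hi⟩ := prod_eq_zero_iff.mp hℓ
  refine prod_eq_zero (mem_univ ℓ) (prod_eq_zero (mem_univ i) ?_)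
  split_ifs
  exacts [hac _ hi, hi]

variable [DecidableEq κ] [Fintype Z]

lemma sum_slotDensity (hq₀ : ∑ w, q₀ w = 1) (hq : ∑ w, q w = 1) (t : ι) :
    ∑ z : ι → κ → Z, slotDensity q₀ q t z = 1 := by
  unfold slotDensity
  rw [sum_prod_prod (fun ℓ _ w => if ℓ = t then q w else q₀ w)]
  refine prod_eq_one fun ℓ _ => prod_eq_one fun _ _ => ?_
  split_ifs <;> assumption

lemma sum_slotDensity_mul_slotDensity_div (hq₀ : ∑ w, q₀ w = 1) (hq : ∑ w, q w = 1)
    (hac : ∀ w, q₀ w = 0 → q w = 0) (t t' : ι) :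
    ∑ z : ι → κ → Z, slotDensity q₀ q t z * slotDensity q₀ q t' z / ∏ ℓ, ∏ i, q₀ (z ℓ i)
      = if t = t' then (∑ w, q w * q w / q₀ w) ^ Fintype.card κ else 1 := by
  have hblock : ∀ ℓ, ∑ w, (if ℓ = t then q w else q₀ w) * (if ℓ = t' then q w else q₀ w) / q₀ w
      = if ℓ = t ∧ ℓ = t' then ∑ w, q w * q w / q₀ w else 1 := fun ℓ => by
    have hcancel : ∀ w, q w * q₀ w / q₀ w = q w := fun w => mul_div_cancel_right_of_imp (hac w)
    by_cases h : ℓ = t <;> by_cases h' : ℓ = t'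
    · simp only [if_pos h, if_pos h', if_pos (And.intro h h')]
    · simp only [if_pos h, if_neg h', if_neg (h' ∘ And.right), hcancel, hq]
    · simp only [if_neg h, if_pos h', if_neg (h ∘ And.left), mul_comm (q₀ _), hcancel, hq]
    · simp only [if_neg h, if_neg h', if_neg (h ∘ And.left), mul_div_cancel_right_of_imp id, hq₀]
  simp only [slotDensity, ← prod_mul_distrib, ← prod_div_distrib]
  rw [sum_prod_prod (fun ℓ _ w =>
    (if ℓ = t then q w else q₀ w) * (if ℓ = t' then q w else q₀ w) / q₀ w)]
  simp only [hblock, prod_const, card_univ]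
  split_ifs with htt'
  · subst htt'
    simp [prod_ite_eq']
  · exact prod_eq_one fun ℓ _ => by
      rw [if_neg fun h => htt' (h.1.symm.trans h.2), one_pow]

end Slots

theorem stmt1_general {Z : Type*} [Fintype Z] (Q0 Q1 : Z → ℝ)
    (hQ0nonneg : ∀ z, 0 ≤ Q0 z) (hQ1nonneg : ∀ z, 0 ≤ Q1 z)
    (hQ0sum : ∑ z, Q0 z = 1) (hQ1sum : ∑ z, Q1 z = 1)
    (hac : ∀ z, Q0 z = 0 → Q1 z = 0)
    (n L : ℕ) (hL : 0 < L)
    (α : ℝ) (hα : α ∈ Set.Ioo (0 : ℝ) 1) :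
    ∑ z : Fin L → Fin n → Z,
        ((1 / (L : ℝ)) * ∑ t : Fin L, ∏ ℓ : Fin L, ∏ i : Fin n,
            (if ℓ = t then (1 - α) * Q0 (z ℓ i) + α * Q1 (z ℓ i) else Q0 (z ℓ i))) *
          Real.log
            (((1 / (L : ℝ)) * ∑ t : Fin L, ∏ ℓ : Fin L, ∏ i : Fin n,
                (if ℓ = t then (1 - α) * Q0 (z ℓ i) + α * Q1 (z ℓ i) else Q0 (z ℓ i))) /
              (∏ ℓ : Fin L, ∏ i : Fin n, Q0 (z ℓ i)))
      ≤ ((1 + α ^ 2 * (∑ z, (Q1 z - Q0 z) ^ 2 / Q0 z)) ^ n - 1) / (L : ℝ) := by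
  have : Nonempty (Fin L) := Fin.pos_iff_nonempty.mp hL
  set Qα : Z → ℝ := fun w => (1 - α) * Q0 w + α * Q1 w
  set Q : (Fin L → Fin n → Z) → ℝ := fun z => ∏ ℓ, ∏ i, Q0 (z ℓ i)
  set P : (Fin L → Fin n → Z) → ℝ := fun z => 1 / (L : ℝ) * ∑ t, slotDensity Q0 Qα t z
  change ∑ z, P z * log (P z / Q z) ≤ _
  have hQα_nonneg : ∀ w, 0 ≤ Qα w := fun w =>
    add_nonneg (mul_nonneg (sub_nonneg.mpr hα.2.le) (hQ0nonneg w))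
      (mul_nonneg hα.1.le (hQ1nonneg w))
  have hQα_ac : ∀ w, Q0 w = 0 → Qα w = 0 := fun w h => by simp [Qα, h, hac w h]
  have hQα_sum : ∑ w, Qα w = 1 := by
    simp only [Qα, sum_add_distrib, ← mul_sum, hQ0sum, hQ1sum]
    ring
  have hP_nonneg : ∀ z, 0 ≤ P z := fun z =>
    mul_nonneg (by positivity) (sum_nonneg fun t _ => slotDensity_nonneg hQ0nonneg hQα_nonneg t z)
  have hP_ac : ∀ z, Q z = 0 → P z = 0 := fun z hz => by
    simp only [P, slotDensity_eq_zero hQα_ac _ hz, sum_const_zero, mul_zero]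
  have hP_sum : ∑ z, P z = 1 := by
    simp only [P, ← mul_sum]
    rw [sum_comm]
    simp only [sum_slotDensity hQ0sum hQα_sum, sum_const, card_univ, Fintype.card_fin,
      nsmul_eq_mul, mul_one]
    field_simp
  have hP_sq : ∑ z, P z * P z / Q z
      = ((1 + α ^ 2 * ∑ z, (Q1 z - Q0 z) ^ 2 / Q0 z) ^ n - 1) / L + 1 := by
    rw [← sum_mix_mul_mix_div Q0 Q1 hQ0sum hQ1sum hac α]
    simpa only [Fintype.card_fin] using
      sum_mean_mul_mean_div (fun t => slotDensity Q0 Qα t) Q _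
        (sum_slotDensity_mul_slotDensity_div hQ0sum hQα_sum hQα_ac)
  have hQ_nonneg : ∀ z, 0 ≤ Q z := fun z =>
    prod_nonneg fun ℓ _ => prod_nonneg fun i _ => hQ0nonneg _
  linarith [sum_mul_log_div_le P Q hP_nonneg hQ_nonneg hP_ac]

/-- Same setup as Statement 0 (absolute continuity `Q1 ≪ Q0`), with bound
`D(Q_α^N ‖ Q0^⊗N) ≤ ((1 + α² χ₂(Q1‖Q0))^n − 1)/L`. -/
theorem stmt1 {Z : Type*} [Fintype Z] (Q0 Q1 : Z → ℝ)
    (hQ0nonneg : ∀ z, 0 ≤ Q0 z) (hQ1nonneg : ∀ z, 0 ≤ Q1 z)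
    (hQ0sum : ∑ z, Q0 z = 1) (hQ1sum : ∑ z, Q1 z = 1)
    (hac : ∀ z, Q0 z = 0 → Q1 z = 0)
    (n L : ℕ) (hn : 0 < n) (hL : 0 < L)
    (α : ℝ) (hα : α ∈ Set.Ioo (0 : ℝ) 1) :
    ∑ z : Fin L → Fin n → Z,
        ((1 / (L : ℝ)) * ∑ t : Fin L, ∏ ℓ : Fin L, ∏ i : Fin n,
            (if ℓ = t then (1 - α) * Q0 (z ℓ i) + α * Q1 (z ℓ i) else Q0 (z ℓ i))) *
          Real.log
            (((1 / (L : ℝ)) * ∑ t : Fin L, ∏ ℓ : Fin L, ∏ i : Fin n,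
                (if ℓ = t then (1 - α) * Q0 (z ℓ i) + α * Q1 (z ℓ i) else Q0 (z ℓ i))) /
              (∏ ℓ : Fin L, ∏ i : Fin n, Q0 (z ℓ i)))
      ≤ ((1 + α ^ 2 * (∑ z, (Q1 z - Q0 z) ^ 2 / Q0 z)) ^ n - 1) / (L : ℝ) :=
  stmt1_general Q0 Q1 hQ0nonneg hQ1nonneg hQ0sum hQ1sum hac n L hL α hα
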